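/- arXiv:2108.00248 — 3 statements merged into one kernel-verified Lean document; each statement's English description precedes it below -/
import Mathlib

section
/- Let γ < 0, p > 5, and let φ ∈ H¹(ℝ). Define ‖φ‖_H² = ‖φ'‖_{L²}² − γ|φ(0)|² and P_γ(φ) = ‖φ'‖_{L²}² − (γ/2)|φ(0)|² − ((p-1)/(2(p+1)))‖φ‖_{L^{p+1}}^{p+1}. If ‖φ‖_{L²}^σ ‖φ‖_H ≤ ‖Q‖_{L²}^σ ‖Q'‖_{L²}, where σ = (p+3)/(p-5) and Q is the free NLS ground state, then P_γ(φ) ≥ 0. -/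
open Real MeasureTheory

/-- `∫ |φ'|²`. -/
noncomputable def gradSq (φ : ℝ → ℂ) : ℝ := ∫ x : ℝ, ‖deriv φ x‖ ^ 2

/-- `∫ |φ|²` (squared `L²` norm, the mass `M(φ)`). -/
noncomputable def l2Sq (φ : ℝ → ℂ) : ℝ := ∫ x : ℝ, ‖φ x‖ ^ 2

/-- `∫ |φ|^{p+1}` (the `L^{p+1}` norm to the power `p+1`). -/
noncomputable def lpP (p : ℝ) (φ : ℝ → ℂ) : ℝ := ∫ x : ℝ, ‖φ x‖ ^ (p + 1)

/-- The energy `E_γ(φ)`. -/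
noncomputable def Egam (γ p : ℝ) (φ : ℝ → ℂ) : ℝ :=
  (1 / 2) * gradSq φ - (γ / 2) * ‖φ 0‖ ^ 2 - (1 / (p + 1)) * lpP p φ

/-- The virial functional `P_γ(φ)`. -/
noncomputable def Pgam (γ p : ℝ) (φ : ℝ → ℂ) : ℝ :=
  gradSq φ - (γ / 2) * ‖φ 0‖ ^ 2 - ((p - 1) / (2 * (p + 1))) * lpP p φ

/-- `‖φ‖_H² = ‖φ'‖_{L²}² - γ|φ(0)|²`. -/
noncomputable def HnormSq (γ : ℝ) (φ : ℝ → ℂ) : ℝ := gradSq φ - γ * ‖φ 0‖ ^ 2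

/-- if `‖φ‖_{L²}^σ ‖φ‖_H ≤ ‖Q‖_{L²}^σ ‖Q'‖_{L²}` then `P_γ(φ) ≥ 0`. -/
theorem stmt4 (γ p σ : ℝ) (hγ : γ < 0) (hp : 5 < p) (hσ : σ = (p + 3) / (p - 5))
    (φ : ℝ → ℂ) (nQ gQ CGN : ℝ) (hnQ : 0 < nQ) (hgQ : 0 < gQ) (hCGN : 0 < CGN)
    (hGN : lpP p φ ≤
      CGN * (Real.sqrt (gradSq φ)) ^ ((p - 1) / 2) * (Real.sqrt (l2Sq φ)) ^ ((p + 3) / 2))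
    (hQid : ((p - 1) / (2 * (p + 1))) * CGN * nQ ^ ((p + 3) / 2) * gQ ^ ((p - 5) / 2) = 1)
    (hyp : (Real.sqrt (l2Sq φ)) ^ σ * Real.sqrt (HnormSq γ φ) ≤ nQ ^ σ * gQ) :
    0 ≤ Pgam γ p φ := by
  have hG : 0 ≤ gradSq φ := integral_nonneg (fun x => by positivity)
  have hM : 0 ≤ l2Sq φ := integral_nonneg (fun x => by positivity)
  have ha : (0:ℝ) ≤ ‖φ 0‖ ^ 2 := by positivity
  have hγa : γ * ‖φ 0‖ ^ 2 ≤ 0 := mul_nonpos_of_nonpos_of_nonneg hγ.le ha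
  have hGH : gradSq φ ≤ HnormSq γ φ := by unfold HnormSq; linarith
  have hH0 : 0 ≤ HnormSq γ φ := le_trans hG hGH
  set G := gradSq φ with hGdef
  set M := l2Sq φ with hMdef
  set H := HnormSq γ φ with hHdef
  have hsG : (0:ℝ) ≤ Real.sqrt G := Real.sqrt_nonneg _
  have hsH : (0:ℝ) ≤ Real.sqrt H := Real.sqrt_nonneg _
  have hsM : (0:ℝ) ≤ Real.sqrt M := Real.sqrt_nonneg _
  have he : (0:ℝ) ≤ (p - 5) / 2 := by linarith
  have hp5 : p - 5 ≠ 0 := by linarith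
  have hc : (0:ℝ) < (p - 1) / (2 * (p + 1)) := div_pos (by linarith) (by linarith)
  -- Step 1: raise the hypothesis to the power (p-5)/2
  have h2 : Real.sqrt M ^ ((p + 3) / 2) * Real.sqrt H ^ ((p - 5) / 2)
      ≤ nQ ^ ((p + 3) / 2) * gQ ^ ((p - 5) / 2) := by
    have h1 := Real.rpow_le_rpow (by positivity) hyp he
    rw [Real.mul_rpow (by positivity) hsH, Real.mul_rpow (by positivity) hgQ.le,
        ← Real.rpow_mul hsM, ← Real.rpow_mul hnQ.le] at h1
    have hσe : σ * ((p - 5) / 2) = (p + 3) / 2 := by rw [hσ]; field_simp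
    rwa [hσe] at h1
  have key : ((p - 1) / (2 * (p + 1))) * CGN *
      (Real.sqrt M ^ ((p + 3) / 2) * Real.sqrt H ^ ((p - 5) / 2)) ≤ 1 := by
    calc ((p - 1) / (2 * (p + 1))) * CGN *
        (Real.sqrt M ^ ((p + 3) / 2) * Real.sqrt H ^ ((p - 5) / 2))
        ≤ ((p - 1) / (2 * (p + 1))) * CGN * (nQ ^ ((p + 3) / 2) * gQ ^ ((p - 5) / 2)) :=
          mul_le_mul_of_nonneg_left h2 (by positivity)
      _ = ((p - 1) / (2 * (p + 1))) * CGN * nQ ^ ((p + 3) / 2) * gQ ^ ((p - 5) / 2) := by ring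
      _ = 1 := hQid
  -- Step 2: bound √G^((p-1)/2)
  have hGb : Real.sqrt G ^ ((p - 1) / 2) ≤ G * Real.sqrt H ^ ((p - 5) / 2) := by
    rcases eq_or_lt_of_le hG with h0 | h0
    · rw [← h0, Real.sqrt_zero, Real.zero_rpow (ne_of_gt (div_pos (by linarith) two_pos)), zero_mul]
    · have hsG0 : (0:ℝ) < Real.sqrt G := Real.sqrt_pos.mpr h0
      have hsplit : (p - 1) / 2 = (2:ℝ) + (p - 5) / 2 := by ring
      rw [hsplit, Real.rpow_add hsG0]
      have e2 : Real.sqrt G ^ (2:ℝ) = G := by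
        rw [show (2:ℝ) = ((2:ℕ):ℝ) by norm_num, Real.rpow_natCast, Real.sq_sqrt hG]
      rw [e2]
      exact mul_le_mul_of_nonneg_left
        (Real.rpow_le_rpow hsG (Real.sqrt_le_sqrt hGH) he) hG
  -- Step 3: the virial bound
  have hlp : ((p - 1) / (2 * (p + 1))) * lpP p φ ≤ G := by
    calc ((p - 1) / (2 * (p + 1))) * lpP p φ
        ≤ ((p - 1) / (2 * (p + 1))) *
          (CGN * Real.sqrt G ^ ((p - 1) / 2) * Real.sqrt M ^ ((p + 3) / 2)) :=
          mul_le_mul_of_nonneg_left hGN hc.le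
      _ ≤ ((p - 1) / (2 * (p + 1))) *
          (CGN * (G * Real.sqrt H ^ ((p - 5) / 2)) * Real.sqrt M ^ ((p + 3) / 2)) := by
          apply mul_le_mul_of_nonneg_left _ hc.le
          exact mul_le_mul_of_nonneg_right
            (mul_le_mul_of_nonneg_left hGb hCGN.le) (by positivity)
      _ = G * (((p - 1) / (2 * (p + 1))) * CGN *
          (Real.sqrt M ^ ((p + 3) / 2) * Real.sqrt H ^ ((p - 5) / 2))) := by ring
      _ ≤ G * 1 := mul_le_mul_of_nonneg_left key hG
      _ = G := mul_one G
  have hγa2 : γ / 2 * ‖φ 0‖ ^ 2 ≤ 0 := by nlinarith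
  unfold Pgam
  rw [← hGdef]
  linarith
end

section
/- Let γ < 0, p > 5, σ = (p+3)/(p-5), and φ ∈ H¹(ℝ). Define E_γ(φ) = (1/2)‖φ'‖_{L²}² − (γ/2)|φ(0)|² − (1/(p+1))‖φ‖_{L^{p+1}}^{p+1}, M(φ) = ‖φ‖_{L²}², P_γ(φ) = ‖φ'‖_{L²}² − (γ/2)|φ(0)|² − ((p-1)/(2(p+1)))‖φ‖_{L^{p+1}}^{p+1}, and ‖φ‖_H² = ‖φ'‖_{L²}² − γ|φ(0)|². If M(φ)^σ E_γ(φ) ≤ M(Q)^σ E₀(Q) and P_γ(φ) ≥ 0, then ‖φ‖_{L²}^σ ‖φ‖_H ≤ ‖Q‖_{L²}^σ ‖Q'‖_{L²}. -/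
open Real MeasureTheory

/-! The combination `E_γ - (2/(p-1)) P_γ` cancels the `L^{p+1}` term and equals
`((p-5)/(2(p-1))) ‖φ‖_H²` minus `(γ/(p-1)) |φ(0)|² ≥ 0`, so under `P_γ(φ) ≥ 0` the energy dominates a
positive multiple of `‖φ‖_H²`. The mass-energy bound then gives `M(φ)^σ ‖φ‖_H² ≤ M(Q)^σ ‖Q'‖²`, and
square roots finish. -/

lemma Real.sqrt_rpow {x : ℝ} (hx : 0 ≤ x) (y : ℝ) : √x ^ y = √(x ^ y) := by
  rw [Real.sqrt_eq_rpow, Real.sqrt_eq_rpow, ← Real.rpow_mul hx, ← Real.rpow_mul hx, mul_comm]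

lemma Real.sqrt_rpow_mul_sqrt_le {a b A B σ : ℝ} (ha : 0 ≤ a) (hA : 0 ≤ A) (hB : 0 ≤ B)
    (h : a ^ σ * b ≤ (A ^ 2) ^ σ * B ^ 2) : √a ^ σ * √b ≤ A ^ σ * B := by
  rw [Real.sqrt_rpow ha, ← Real.sqrt_mul (Real.rpow_nonneg ha σ),
    Real.sqrt_le_left (by positivity), mul_pow, Real.rpow_pow_comm hA]
  exact h

lemma l2Sq_nonneg (φ : ℝ → ℂ) : 0 ≤ l2Sq φ :=
  integral_nonneg fun _ => by positivity

lemma Egam_sub_two_div_mul_Pgam {p : ℝ} (hp : p ≠ 1) (γ : ℝ) (φ : ℝ → ℂ) :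
    Egam γ p φ - 2 / (p - 1) * Pgam γ p φ
      = (p - 5) / (2 * (p - 1)) * HnormSq γ φ - γ / (p - 1) * ‖φ 0‖ ^ 2 := by
  have hp1 : p - 1 ≠ 0 := sub_ne_zero.2 hp
  unfold Egam Pgam HnormSq
  field_simp
  ring

lemma HnormSq_le_Egam_of_Pgam_nonneg {γ p : ℝ} (hγ : γ ≤ 0) (hp : 1 < p) (φ : ℝ → ℂ)
    (hP : 0 ≤ Pgam γ p φ) : (p - 5) / (2 * (p - 1)) * HnormSq γ φ ≤ Egam γ p φ := by
  have hp1 : 0 < p - 1 := sub_pos.2 hp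
  have hvirial : 0 ≤ 2 / (p - 1) * Pgam γ p φ := mul_nonneg (by positivity) hP
  have hdelta : γ / (p - 1) * ‖φ 0‖ ^ 2 ≤ 0 :=
    mul_nonpos_of_nonpos_of_nonneg (div_nonpos_of_nonpos_of_nonneg hγ hp1.le) (by positivity)
  linarith [Egam_sub_two_div_mul_Pgam hp.ne' γ φ]

theorem stmt5_general (γ p σ : ℝ) (hγ : γ < 0) (hp : 5 < p)
    (φ : ℝ → ℂ) (MQ gQ eQ : ℝ) (hMQ : 0 ≤ MQ) (hgQ : 0 ≤ gQ)
    (heQ : eQ = ((p - 5) / (2 * (p - 1))) * gQ ^ 2)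
    (hME : (l2Sq φ) ^ σ * Egam γ p φ ≤ (MQ ^ 2) ^ σ * eQ)
    (hP : 0 ≤ Pgam γ p φ) :
    (Real.sqrt (l2Sq φ)) ^ σ * Real.sqrt (HnormSq γ φ) ≤ MQ ^ σ * gQ := by
  have hc : 0 < (p - 5) / (2 * (p - 1)) := div_pos (by linarith) (by linarith)
  refine Real.sqrt_rpow_mul_sqrt_le (l2Sq_nonneg φ) hMQ hgQ (le_of_mul_le_mul_left ?_ hc)
  calc (p - 5) / (2 * (p - 1)) * (l2Sq φ ^ σ * HnormSq γ φ)
      = l2Sq φ ^ σ * ((p - 5) / (2 * (p - 1)) * HnormSq γ φ) := by ring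
    _ ≤ l2Sq φ ^ σ * Egam γ p φ :=
        mul_le_mul_of_nonneg_left (HnormSq_le_Egam_of_Pgam_nonneg hγ.le (by linarith) φ hP)
          (Real.rpow_nonneg (l2Sq_nonneg φ) σ)
    _ ≤ (MQ ^ 2) ^ σ * eQ := hME
    _ = (p - 5) / (2 * (p - 1)) * ((MQ ^ 2) ^ σ * gQ ^ 2) := by rw [heQ]; ring

/-- below the mass-energy threshold with `P_γ(φ) ≥ 0` one has
`‖φ‖_{L²}^σ ‖φ‖_H ≤ ‖Q‖_{L²}^σ ‖Q'‖_{L²}`. -/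
theorem stmt5 (γ p σ : ℝ) (hγ : γ < 0) (hp : 5 < p) (hσ : σ = (p + 3) / (p - 5))
    (φ : ℝ → ℂ) (MQ gQ eQ : ℝ) (hMQ : 0 ≤ MQ) (hgQ : 0 ≤ gQ)
    (heQ : eQ = ((p - 5) / (2 * (p - 1))) * gQ ^ 2)
    (hME : (l2Sq φ) ^ σ * Egam γ p φ ≤ (MQ ^ 2) ^ σ * eQ)
    (hP : 0 ≤ Pgam γ p φ) :
    (Real.sqrt (l2Sq φ)) ^ σ * Real.sqrt (HnormSq γ φ) ≤ MQ ^ σ * gQ :=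
  stmt5_general γ p σ hγ hp φ MQ gQ eQ hMQ hgQ heQ hME hP
end

section
/- Let γ < 0, p > 5, and let u ∈ H¹(ℝ) satisfy E_γ(u) = E₀(Q), M(u) = M(Q), P_γ(u) ≥ 0, where Q is the free NLS ground state. Then ‖u'‖_{L²}² − γ|u(0)|² ≤ ‖Q'‖_{L²}², and moreover there exist constants c, C > 0 depending only on p, γ such that c·S₀(Q) ≤ ‖u'‖_{L²}² + ‖u‖_{L²}² − γ|u(0)|² ≤ C·S₀(Q), where S₀(Q) = E₀(Q) + (1/2)M(Q). -/
open Real MeasureTheory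

/-!
The combination `E_γ - (2/(p-1)) P_γ` has no `L^{p+1}` term, and for `γ ≤ 0` it dominates
`(p-5)/(2(p-1)) · (‖u'‖² - γ|u(0)|²)`. Since `P_γ(u) ≥ 0`, this is at most
`E_γ(u) = E₀(Q) = (p-5)/(2(p-1)) ‖Q'‖²`, whence the first bound for `p > 5`. The two Pohozaev
relations give `‖Q'‖² = (p-1)/(p+3) · M(Q) = S₀(Q)`, so `M(u) = M(Q)` and
`0 ≤ ‖u'‖² - γ|u(0)|² ≤ ‖Q'‖²` pin `‖u'‖² + ‖u‖² - γ|u(0)|²` between `M(Q)` and `2(p+1)/(p+3) · M(Q)`.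
-/

lemma gradSq_nonneg (φ : ℝ → ℂ) : 0 ≤ gradSq φ :=
  integral_nonneg fun _ => by positivity

lemma HnormSq_nonneg {γ : ℝ} (hγ : γ ≤ 0) (φ : ℝ → ℂ) : 0 ≤ HnormSq γ φ := by
  have := gradSq_nonneg φ
  unfold HnormSq
  nlinarith [sq_nonneg ‖φ 0‖]

lemma Egam_sub_Pgam {p : ℝ} (hp : p ≠ 1) (γ : ℝ) (φ : ℝ → ℂ) :
    Egam γ p φ - 2 / (p - 1) * Pgam γ p φ =
      (p - 5) / (2 * (p - 1)) * gradSq φ - γ * (p - 3) / (2 * (p - 1)) * ‖φ 0‖ ^ 2 := by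
  have hp1 : p - 1 ≠ 0 := sub_ne_zero.mpr hp
  unfold Egam Pgam
  field_simp
  ring

lemma HnormSq_le_Egam_sub_Pgam {γ p : ℝ} (hγ : γ ≤ 0) (hp : 1 < p) (φ : ℝ → ℂ) :
    (p - 5) / (2 * (p - 1)) * HnormSq γ φ ≤ Egam γ p φ - 2 / (p - 1) * Pgam γ p φ := by
  have hp1 : p - 1 ≠ 0 := by linarith
  have hgap : Egam γ p φ - 2 / (p - 1) * Pgam γ p φ - (p - 5) / (2 * (p - 1)) * HnormSq γ φ =
      -γ * ‖φ 0‖ ^ 2 / (p - 1) := by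
    rw [Egam_sub_Pgam hp.ne', HnormSq]
    field_simp
    ring
  have : 0 ≤ -γ * ‖φ 0‖ ^ 2 / (p - 1) :=
    div_nonneg (mul_nonneg (neg_nonneg.mpr hγ) (sq_nonneg _)) (by linarith)
  linarith

lemma HnormSq_le_of_Egam_le {γ p gQ : ℝ} (hγ : γ ≤ 0) (hp : 5 < p) {φ : ℝ → ℂ}
    (hE : Egam γ p φ ≤ (p - 5) / (2 * (p - 1)) * gQ ^ 2) (hP : 0 ≤ Pgam γ p φ) :
    HnormSq γ φ ≤ gQ ^ 2 := by
  have hcoef : 0 < (p - 5) / (2 * (p - 1)) := div_pos (by linarith) (by linarith)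
  have hPterm : 0 ≤ 2 / (p - 1) * Pgam γ p φ := mul_nonneg (div_nonneg zero_le_two (by linarith)) hP
  have hgap := HnormSq_le_Egam_sub_Pgam hγ (show 1 < p by linarith) φ
  exact (mul_le_mul_iff_right₀ hcoef).mp (by linarith)

theorem stmt18_general (γ p eQ gQ MQ : ℝ) (hγ : γ < 0) (hp : 5 < p)
    (heQ : eQ = ((p - 5) / (2 * (p - 1))) * gQ ^ 2)
    (heQ2 : eQ = ((p - 5) / (2 * (p + 3))) * MQ)
    (u : ℝ → ℂ) (hE : Egam γ p u = eQ) (hM : l2Sq u = MQ) (hP : 0 ≤ Pgam γ p u) :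
    gradSq u - γ * ‖u 0‖ ^ 2 ≤ gQ ^ 2 ∧
      ∃ c C : ℝ, 0 < c ∧ 0 < C ∧
        c * (eQ + (1 / 2) * MQ) ≤ gradSq u + l2Sq u - γ * ‖u 0‖ ^ 2 ∧
        gradSq u + l2Sq u - γ * ‖u 0‖ ^ 2 ≤ C * (eQ + (1 / 2) * MQ) := by
  have hH : HnormSq γ u ≤ gQ ^ 2 := HnormSq_le_of_Egam_le hγ.le hp (hE.trans heQ).le hP
  have hp1 : p - 1 ≠ 0 := by linarith
  have hp3 : p + 3 ≠ 0 := by linarith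
  have hp5 : p - 5 ≠ 0 := by linarith
  have hgQ : gQ ^ 2 = (p - 1) / (p + 3) * MQ := by
    rw [heQ] at heQ2
    field_simp at heQ2 ⊢
    linear_combination heQ2
  have hS : eQ + 1 / 2 * MQ = (p - 1) / (p + 3) * MQ := by
    rw [heQ2]; field_simp; ring
  have hsplit : gradSq u + l2Sq u - γ * ‖u 0‖ ^ 2 = HnormSq γ u + MQ := by
    rw [HnormSq, hM]; ring
  refine ⟨hH, (p + 3) / (p - 1), 2 * (p + 1) / (p - 1), div_pos (by linarith) (by linarith),
    div_pos (by linarith) (by linarith), ?_, ?_⟩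
  · have hc : (p + 3) / (p - 1) * ((p - 1) / (p + 3) * MQ) = MQ := by field_simp
    rw [hsplit, hS, hc]
    linarith [HnormSq_nonneg hγ.le u]
  · have hC : 2 * (p + 1) / (p - 1) * ((p - 1) / (p + 3) * MQ) = (p - 1) / (p + 3) * MQ + MQ := by
      field_simp; ring
    rw [hsplit, hS, hC]
    linarith

/-- at the threshold, `‖u'‖² − γ|u(0)|² ≤ ‖Q'‖²` and the `H¹`-type quantity of
`u` is comparable to `S₀(Q) = E₀(Q) + M(Q)/2`. -/
theorem stmt18 (γ p eQ gQ MQ : ℝ) (hγ : γ < 0) (hp : 5 < p) (hMQ : 0 < MQ) (hgQ : 0 < gQ)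
    (heQ : eQ = ((p - 5) / (2 * (p - 1))) * gQ ^ 2)
    (heQ2 : eQ = ((p - 5) / (2 * (p + 3))) * MQ)
    (u : ℝ → ℂ) (hE : Egam γ p u = eQ) (hM : l2Sq u = MQ) (hP : 0 ≤ Pgam γ p u) :
    gradSq u - γ * ‖u 0‖ ^ 2 ≤ gQ ^ 2 ∧
      ∃ c C : ℝ, 0 < c ∧ 0 < C ∧
        c * (eQ + (1 / 2) * MQ) ≤ gradSq u + l2Sq u - γ * ‖u 0‖ ^ 2 ∧
        gradSq u + l2Sq u - γ * ‖u 0‖ ^ 2 ≤ C * (eQ + (1 / 2) * MQ) :=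
  stmt18_general γ p eQ gQ MQ hγ hp heQ heQ2 u hE hM hP
end
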